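/- For an OCF κ' over Σ' ⊆ Σ, the belief set of the lifting is the deductive closure with respect to Σ of the prior beliefs: Bel(κ'↑Σ) = Cn_Σ(Bel(κ')). -/
import Mathlib


/-- Propositional formulas over atoms `ℕ`. -/
inductive Fm where
  | var : ℕ → Fm
  | top : Fm
  | bot : Fm
  | neg : Fm → Fm
  | conj : Fm → Fm → Fm
  | disj : Fm → Fm → Fm

/-- Evaluation of a formula under a total valuation. -/
def Fm.eval (v : ℕ → Bool) : Fm → Bool
  | var n => v n
  | top => true
  | bot => false
  | neg φ => !(φ.eval v)
  | conj φ ψ => φ.eval v && ψ.eval v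
  | disj φ ψ => φ.eval v || ψ.eval v

/-- The atoms mentioned in a formula. -/
def Fm.atoms : Fm → Set ℕ
  | var n => {n}
  | top => ∅
  | bot => ∅
  | neg φ => φ.atoms
  | conj φ ψ => φ.atoms ∪ ψ.atoms
  | disj φ ψ => φ.atoms ∪ ψ.atoms

/-- The language `L_S` over signature `S`: formulas mentioning only atoms in `S`. -/
def Lang (S : Set ℕ) : Set Fm := {φ | φ.atoms ⊆ S}

/-- Interpretations `Ω_S` over signature `S`. -/
def Itp (S : Set ℕ) := ↥S → Bool

open Classical in
/-- Extend an interpretation over `S` to a total valuation (false outside `S`). -/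
noncomputable def Itp.toVal {S : Set ℕ} (ω : Itp S) : ℕ → Bool :=
  fun n => if h : n ∈ S then ω ⟨n, h⟩ else false

/-- Satisfaction of a formula by an interpretation over `S`. -/
def Itp.sat {S : Set ℕ} (ω : Itp S) (φ : Fm) : Prop := φ.eval ω.toVal = true

/-- Restriction of an interpretation over `S` to a subsignature `S'`. -/
def Itp.restrict {S' S : Set ℕ} (h : S' ⊆ S) (ω : Itp S) : Itp S' :=
  fun n => ω ⟨n.1, h n.2⟩

/-- Models over `S` of a set of formulas. -/
def Models (S : Set ℕ) (Γ : Set Fm) : Set (Itp S) := {ω | ∀ φ ∈ Γ, ω.sat φ}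

/-- Semantic entailment over `S` between sets of formulas. -/
def Entails (S : Set ℕ) (Γ Δ : Set Fm) : Prop := Models S Γ ⊆ Models S Δ

/-- Consequence operator `Cn_S`. -/
def Cn (S : Set ℕ) (Γ : Set Fm) : Set Fm :=
  {φ | φ ∈ Lang S ∧ ∀ ω ∈ Models S Γ, ω.sat φ}

/-- Delgrande forgetting `F(Γ,P) = Cn_S(Γ) ∩ L_{S\P}`. -/
def Forget (S : Set ℕ) (Γ : Set Fm) (P : Set ℕ) : Set Fm :=
  Cn S Γ ∩ Lang (S \ P)

/-- Reduction of a set of models to a subsignature. -/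
def reduce {S' S : Set ℕ} (h : S' ⊆ S) (M : Set (Itp S)) : Set (Itp S') :=
  {ω' | ∃ ω ∈ M, ω.restrict h = ω'}

/-- Expansion of a set of models to a supersignature. -/
def expand {S' S : Set ℕ} (h : S' ⊆ S) (M' : Set (Itp S')) : Set (Itp S) :=
  {ω | ω.restrict h ∈ M'}

/-- An OCF over `S` is a ranking function attaining rank 0. -/
def IsOCF {S : Set ℕ} (κ : Itp S → ℕ) : Prop := ∃ ω, κ ω = 0

/-- The models (rank-0 interpretations) of an OCF. -/
def OCFMod {S : Set ℕ} (κ : Itp S → ℕ) : Set (Itp S) := {ω | κ ω = 0}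

/-- The belief set of an OCF over `S`. -/
def Bel (S : Set ℕ) (κ : Itp S → ℕ) : Set Fm :=
  {φ | φ ∈ Lang S ∧ ∀ ω ∈ OCFMod κ, ω.sat φ}

/-- Marginalisation of an OCF to a subsignature. -/
noncomputable def marg {S' S : Set ℕ} (h : S' ⊆ S) (κ : Itp S → ℕ) : Itp S' → ℕ :=
  fun ω' => sInf {n | ∃ ω : Itp S, ω.restrict h = ω' ∧ κ ω = n}

/-- Lifting of an OCF over `S'` to a supersignature `S`. -/
def lift {S' S : Set ℕ} (h : S' ⊆ S) (κ' : Itp S' → ℕ) : Itp S → ℕ :=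
  fun ω => κ' (ω.restrict h)

/-- Substitution of the atom `ρ` by formula `χ`. -/
def Fm.subst (ρ : ℕ) (χ : Fm) : Fm → Fm
  | var n => if n = ρ then χ else var n
  | top => top
  | bot => bot
  | neg φ => neg (subst ρ χ φ)
  | conj φ ψ => conj (subst ρ χ φ) (subst ρ χ ψ)
  | disj φ ψ => disj (subst ρ χ φ) (subst ρ χ ψ)

/-- Boole's atom forgetting: `forget(φ,ρ) = φ[ρ/⊤] ∨ φ[ρ/⊥]`. -/
def boole (φ : Fm) (ρ : ℕ) : Fm := .disj (φ.subst ρ .top) (φ.subst ρ .bot)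

theorem eval_congr (φ : Fm) (v w : ℕ → Bool) (hvw : ∀ n ∈ φ.atoms, v n = w n) :
    φ.eval v = φ.eval w := by
  induction φ with
  | var n => exact hvw n rfl
  | top => rfl
  | bot => rfl
  | neg φ ih => simp only [Fm.eval]; rw [ih hvw]
  | conj φ ψ ih1 ih2 =>
      simp only [Fm.eval]
      rw [ih1 (fun n hn => hvw n (Or.inl hn)), ih2 (fun n hn => hvw n (Or.inr hn))]
  | disj φ ψ ih1 ih2 =>
      simp only [Fm.eval]
      rw [ih1 (fun n hn => hvw n (Or.inl hn)), ih2 (fun n hn => hvw n (Or.inr hn))]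

theorem sat_restrict {S' S : Set ℕ} (h : S' ⊆ S) (ω : Itp S) (φ : Fm)
    (hφ : φ.atoms ⊆ S') : ω.sat φ ↔ (ω.restrict h).sat φ := by
  unfold Itp.sat
  rw [eval_congr φ ω.toVal (ω.restrict h).toVal]
  intro n hn
  have hn' : n ∈ S' := hφ hn
  simp [Itp.toVal, Itp.restrict, hn', h hn']

def conjList : List Fm → Fm
  | [] => .top
  | f :: l => .conj f (conjList l)

theorem conjList_eval (l : List Fm) (v : ℕ → Bool) :
    (conjList l).eval v = true ↔ ∀ f ∈ l, f.eval v = true := by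
  induction l with
  | nil => simp [conjList, Fm.eval]
  | cons f l ih => simp [conjList, Fm.eval, ih]

theorem conjList_atoms (l : List Fm) (S' : Set ℕ) (hl : ∀ f ∈ l, f.atoms ⊆ S') :
    (conjList l).atoms ⊆ S' := by
  induction l with
  | nil => simp [conjList, Fm.atoms]
  | cons f l ih =>
      simp only [conjList, Fm.atoms]
      exact Set.union_subset (hl f (by simp)) (ih (fun g hg => hl g (by simp [hg])))

/-- literal describing the value of `ω'` at atom `n` -/
noncomputable def lit {S' : Set ℕ} (ω' : Itp S') (n : ℕ) : Fm :=
  if ω'.toVal n = true then Fm.var n else Fm.neg (Fm.var n)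

theorem lit_eval {S' : Set ℕ} (ω' : Itp S') (n : ℕ) (v : ℕ → Bool) :
    (lit ω' n).eval v = true ↔ v n = ω'.toVal n := by
  unfold lit
  by_cases hb : ω'.toVal n = true <;> simp [hb, Fm.eval]

theorem toVal_eq_iff {S' : Set ℕ} (ω₁ ω₂ : Itp S') :
    (∀ n ∈ S', ω₁.toVal n = ω₂.toVal n) ↔ ω₁ = ω₂ := by
  constructor
  · intro hv
    funext x
    have := hv x.1 x.2
    simpa [Itp.toVal, x.2] using this
  · rintro rfl n _; rfl

theorem stmt14 (S S' : Set ℕ) (hS : S.Finite) (h : S' ⊆ S)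
    (κ' : Itp S' → ℕ) (hκ' : IsOCF κ') :
    Bel S (lift h κ') = Cn S (Bel S' κ') := by
  have hS' : S'.Finite := hS.subset h
  set L : List ℕ := hS'.toFinset.toList with hL
  have hmemL : ∀ n, n ∈ L ↔ n ∈ S' := by
    intro n; simp [hL]
  -- key: a Σ-model satisfies all of Bel κ' iff its restriction has rank 0
  have key : ∀ ω : Itp S, (∀ φ ∈ Bel S' κ', ω.sat φ) ↔ κ' (ω.restrict h) = 0 := by
    intro ω
    constructor
    · intro hall
      by_contra hne
      set ω' := ω.restrict h with hω'
      set χ := conjList (L.map (lit ω')) with hχ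
      have hχatoms : χ.atoms ⊆ S' := by
        apply conjList_atoms
        intro f hf
        rcases List.mem_map.mp hf with ⟨n, hn, rfl⟩
        have hn' : n ∈ S' := (hmemL n).mp hn
        unfold lit
        by_cases hb : ω'.toVal n = true <;>
          simp [hb, Fm.atoms, Set.singleton_subset_iff, hn']
      have hχsat : ∀ ω'' : Itp S', ω''.sat χ ↔ ω'' = ω' := by
        intro ω''
        unfold Itp.sat
        rw [hχ, conjList_eval]
        rw [← toVal_eq_iff ω'' ω']
        constructor
        · intro hf n hn
          have := hf (lit ω' n) (List.mem_map.mpr ⟨n, (hmemL n).mpr hn, rfl⟩)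
          exact (lit_eval ω' n ω''.toVal).mp this
        · intro hv f hf
          rcases List.mem_map.mp hf with ⟨n, hn, rfl⟩
          exact (lit_eval ω' n ω''.toVal).mpr (hv n ((hmemL n).mp hn))
      have hbel : (Fm.neg χ) ∈ Bel S' κ' := by
        refine ⟨hχatoms, ?_⟩
        intro ω'' hω''
        have hne'' : ω'' ≠ ω' := by
          intro heq; exact hne (heq ▸ hω'')
        have : ¬ ω''.sat χ := fun hs => hne'' ((hχsat ω'').mp hs)
        unfold Itp.sat at this ⊢
        simp only [Fm.eval]
        simp only [Bool.not_eq_true] at this ⊢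
        simp [this]
      have hsat := hall _ hbel
      rw [sat_restrict h ω (Fm.neg χ) hχatoms] at hsat
      unfold Itp.sat at hsat
      simp only [Fm.eval, Bool.not_eq_true'] at hsat
      have : ω'.sat χ := (hχsat ω').mpr rfl
      unfold Itp.sat at this
      rw [this] at hsat
      exact absurd hsat (by simp)
    · intro h0 φ hφ
      rw [sat_restrict h ω φ hφ.1]
      exact hφ.2 _ h0
  ext φ
  constructor
  · rintro ⟨hφL, hφ⟩
    refine ⟨hφL, ?_⟩
    intro ω hω
    exact hφ ω ((key ω).mp hω)
  · rintro ⟨hφL, hφ⟩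
    refine ⟨hφL, ?_⟩
    intro ω hω
    exact hφ ω ((key ω).mpr hω)
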